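/- For the path P_n and the cycle C_n (n ≥ 3), th_pd×(P_n) = ⌈n/3⌉ = γ(P_n) and th_pd×(C_n) = ⌈n/3⌉ = γ(C_n). -/

import Mathlib

open SimpleGraph Set

variable {V : Type*} {W : Type*}

/-- The closed neighborhood of a set `S`. -/
def closedNbhdSet (G : SimpleGraph V) (S : Set V) : Set V :=
  S ∪ {w | ∃ u ∈ S, G.Adj u w}

/-- One round of the zero forcing propagation step. -/
def pdStep (G : SimpleGraph V) (A : Set V) : Set V :=
  A ∪ {w | ∃ u ∈ A, G.neighborSet u \ A = {w}}

/-- `obs G S k` is the set `P^[k](S)` of vertices observed after round `k`. -/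
def obs (G : SimpleGraph V) (S : Set V) : ℕ → Set V
  | 0 => S
  | 1 => closedNbhdSet G S
  | (n + 2) => pdStep G (obs G S (n + 1))

/-- `S` is a power dominating set. -/
def IsPDS (G : SimpleGraph V) (S : Set V) : Prop :=
  ∃ t, obs G S t = Set.univ

/-- The power propagation time `pt_pd(G;S)`: least positive `t` with `P^[t](S) = V(G)`. -/
noncomputable def ptpd (G : SimpleGraph V) (S : Set V) : ℕ :=
  sInf {t | 1 ≤ t ∧ obs G S t = Set.univ}

/-- `S` is a dominating set. -/
def IsDomSet (G : SimpleGraph V) (S : Set V) : Prop :=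
  closedNbhdSet G S = Set.univ

/-- The domination number `γ(G)`. -/
noncomputable def gamma (G : SimpleGraph V) : ℕ :=
  sInf {k | ∃ S : Set V, IsDomSet G S ∧ S.ncard = k}

/-- The power domination number `γ_P(G)`. -/
noncomputable def gammaP (G : SimpleGraph V) : ℕ :=
  sInf {k | ∃ S : Set V, IsPDS G S ∧ S.ncard = k}

/-- The product power throttling number `th_pd^×(G)`. -/
noncomputable def thpd (G : SimpleGraph V) : ℕ :=
  sInf {m | ∃ S : Set V, IsPDS G S ∧ m = S.ncard * ptpd G S}

/-- The power propagation time of `G`: minimum over minimum power dominating sets. -/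
noncomputable def ptG (G : SimpleGraph V) : ℕ :=
  sInf {t | ∃ S : Set V, IsPDS G S ∧ S.ncard = gammaP G ∧ t = ptpd G S}

/-- `newObs G S k` is `P^(k)(S)`, the set of vertices first observed in round `k`. -/
def newObs (G : SimpleGraph V) (S : Set V) : ℕ → Set V
  | 0 => S
  | (k + 1) => obs G S (k + 1) \ obs G S k

/-- `rd G S v` is the round in which `v` is first observed. -/
noncomputable def rd (G : SimpleGraph V) (S : Set V) (v : V) : ℕ :=
  sInf {k | v ∈ obs G S k}

/-! A set of `⌈n/3⌉` vertices (`1, 4, 7, …`) dominates `P_n`, hence also `C_n`, so it is a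
power dominating set finishing in one round; this gives `th_pd× ≤ ⌈n/3⌉` and `γ ≤ ⌈n/3⌉`.
Conversely, forcing only ever observes neighbours of observed vertices, so everything observed by
round `t` lies within distance `t` of `S`. In a subgraph of `C_n`, the circulant graph on `ℤ/n`
with jump `1`, such a ball has at most `2t + 1` vertices; hence `n ≤ |S| (2t + 1) ≤ 3 |S| t` for
`t ≥ 1`, i.e. `n ≤ 3 th_pd×` and (taking `t = 1`) `n ≤ 3 γ`. -/

lemma closedNbhdSet_mono {G H : SimpleGraph V} (hGH : G ≤ H) {S T : Set V} (hST : S ⊆ T) :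
    closedNbhdSet G S ⊆ closedNbhdSet H T := by
  rintro w (hw | ⟨u, hu, huw⟩)
  · exact Or.inl (hST hw)
  · exact Or.inr ⟨u, hST hu, hGH huw⟩

lemma pdStep_subset_closedNbhdSet (G : SimpleGraph V) (A : Set V) :
    pdStep G A ⊆ closedNbhdSet G A := by
  rintro w (hw | ⟨u, hu, hforce⟩)
  · exact Or.inl hw
  · exact Or.inr ⟨u, hu, (hforce.symm.subset rfl).1⟩

lemma IsDomSet.mono {G H : SimpleGraph V} (hGH : G ≤ H) {S : Set V} (hS : IsDomSet G S) :
    IsDomSet H S :=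
  eq_univ_of_univ_subset (hS ▸ closedNbhdSet_mono hGH subset_rfl)

lemma obs_subset_closedNbhdSet_iterate (G : SimpleGraph V) (S : Set V) :
    ∀ t, obs G S t ⊆ (closedNbhdSet G)^[t] S
  | 0 => subset_rfl
  | 1 => subset_rfl
  | t + 2 => by
    rw [Function.iterate_succ_apply']
    exact (pdStep_subset_closedNbhdSet G _).trans
      (closedNbhdSet_mono le_rfl (obs_subset_closedNbhdSet_iterate G S (t + 1)))

lemma obs_mono (G : SimpleGraph V) (S : Set V) : Monotone (obs G S) :=
  monotone_nat_of_le_succ fun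
    | 0 => subset_union_left
    | _ + 1 => subset_union_left

lemma isPDS_univ (G : SimpleGraph V) : IsPDS G univ := ⟨0, rfl⟩

lemma isDomSet_univ (G : SimpleGraph V) : IsDomSet G univ :=
  eq_univ_of_univ_subset subset_union_left

lemma ptpd_spec {G : SimpleGraph V} {S : Set V} (hS : IsPDS G S) :
    1 ≤ ptpd G S ∧ obs G S (ptpd G S) = univ := by
  obtain ⟨t, ht⟩ := hS
  have hne : {t | 1 ≤ t ∧ obs G S t = univ}.Nonempty :=
    ⟨t + 1, by omega, eq_univ_of_univ_subset (ht ▸ obs_mono G S (Nat.le_succ t))⟩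
  exact Nat.sInf_mem hne

lemma ptpd_le_one {G : SimpleGraph V} {S : Set V} (hS : IsDomSet G S) : ptpd G S ≤ 1 := by
  unfold ptpd
  exact Nat.sInf_le ⟨le_rfl, hS⟩

lemma thpd_le_ncard {G : SimpleGraph V} {S : Set V} (hS : IsDomSet G S) : thpd G ≤ S.ncard :=
  calc thpd G ≤ S.ncard * ptpd G S := by unfold thpd; exact Nat.sInf_le ⟨S, ⟨1, hS⟩, rfl⟩
    _ ≤ S.ncard := mul_le_of_le_one_right (Nat.zero_le _) (ptpd_le_one hS)

lemma gamma_le_ncard {G : SimpleGraph V} {S : Set V} (hS : IsDomSet G S) :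
    gamma G ≤ S.ncard := by
  unfold gamma
  exact Nat.sInf_le ⟨S, hS, rfl⟩

lemma exists_eq_thpd (G : SimpleGraph V) : ∃ S, IsPDS G S ∧ thpd G = S.ncard * ptpd G S := by
  have hne : {m | ∃ S, IsPDS G S ∧ m = S.ncard * ptpd G S}.Nonempty :=
    ⟨_, univ, isPDS_univ G, rfl⟩
  exact Nat.sInf_mem hne

lemma exists_eq_gamma (G : SimpleGraph V) : ∃ S, IsDomSet G S ∧ S.ncard = gamma G := by
  have hne : {k | ∃ S, IsDomSet G S ∧ S.ncard = k}.Nonempty := ⟨_, univ, isDomSet_univ G, rfl⟩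
  exact Nat.sInf_mem hne

section Circulant

variable {A : Type*} [AddGroup A] {G : SimpleGraph A} {a : A}

lemma exists_zsmul_add_of_mem_closedNbhdSet_iterate (hG : G ≤ circulantGraph {a}) (S : Set A) :
    ∀ t : ℕ, ∀ v ∈ (closedNbhdSet G)^[t] S, ∃ s ∈ S, ∃ d ∈ Icc (-t : ℤ) t, v = d • a + s
  | 0, v, hv => ⟨v, hv, 0, by simp⟩
  | t + 1, v, hv => by
    rw [Function.iterate_succ_apply'] at hv
    rcases hv with hv | ⟨u, hu, huv⟩
    · obtain ⟨s, hs, d, ⟨hd₁, hd₂⟩, rfl⟩ :=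
        exists_zsmul_add_of_mem_closedNbhdSet_iterate hG S t v hv
      exact ⟨s, hs, d, ⟨by omega, by omega⟩, rfl⟩
    obtain ⟨s, hs, d, ⟨hd₁, hd₂⟩, rfl⟩ :=
      exists_zsmul_add_of_mem_closedNbhdSet_iterate hG S t u hu
    have hstep : d • a + s = a + v ∨ v = a + (d • a + s) := by
      simpa [sub_eq_iff_eq_add] using (hG huv).2
    rcases hstep with hv | rfl
    · refine ⟨s, hs, -1 + d, ⟨by omega, by omega⟩, ?_⟩
      rw [add_zsmul, neg_one_zsmul, add_assoc]
      exact eq_neg_add_of_add_eq hv.symm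
    · exact ⟨s, hs, 1 + d, ⟨by omega, by omega⟩, by rw [add_zsmul, one_zsmul, add_assoc]⟩

lemma card_le_ncard_mul_of_obs_eq_univ [Finite A] (hG : G ≤ circulantGraph {a}) {S : Set A}
    {t : ℕ} (ht : obs G S t = univ) : Nat.card A ≤ S.ncard * (2 * t + 1) := by
  have hcover : univ ⊆ (fun p : A × ℤ => p.2 • a + p.1) '' (S ×ˢ Icc (-t : ℤ) t) := by
    intro v hv
    rw [← ht] at hv
    obtain ⟨s, hs, d, hd, rfl⟩ := exists_zsmul_add_of_mem_closedNbhdSet_iterate hG S t v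
      (obs_subset_closedNbhdSet_iterate G S t hv)
    exact ⟨(s, d), ⟨hs, hd⟩, rfl⟩
  calc Nat.card A = (univ : Set A).ncard := (ncard_univ A).symm
    _ ≤ (S ×ˢ Icc (-t : ℤ) t).ncard := (ncard_le_ncard hcover).trans (ncard_image_le (toFinite _))
    _ = S.ncard * (2 * t + 1) := by
      rw [ncard_prod, ← Finset.coe_Icc, ncard_coe_finset, Int.card_Icc,
        show ((t : ℤ) + 1 - -t).toNat = 2 * t + 1 by omega]

lemma card_le_three_mul_thpd [Finite A] (hG : G ≤ circulantGraph {a}) :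
    Nat.card A ≤ 3 * thpd G := by
  obtain ⟨S, hS, hth⟩ := exists_eq_thpd G
  obtain ⟨hpos, hobs⟩ := ptpd_spec hS
  have := card_le_ncard_mul_of_obs_eq_univ hG hobs
  rw [hth]
  nlinarith

lemma card_le_three_mul_gamma [Finite A] (hG : G ≤ circulantGraph {a}) :
    Nat.card A ≤ 3 * gamma G := by
  obtain ⟨S, hS, hγ⟩ := exists_eq_gamma G
  have := card_le_ncard_mul_of_obs_eq_univ (t := 1) hG hS
  omega

end Circulant

lemma cycleGraph_eq_circulantGraph_one {n : ℕ} [NeZero n] :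
    cycleGraph n = circulantGraph {1} := by
  obtain ⟨m, rfl⟩ := Nat.exists_eq_succ_of_ne_zero (NeZero.ne n)
  exact cycleGraph_eq_circulantGraph m

/-- The vertices `1, 4, 7, …` (the last one moved to `n - 1` if needed) dominate `P_n`. -/
lemma exists_isDomSet_pathGraph {n : ℕ} (hn : 1 ≤ n) :
    ∃ S : Set (Fin n), IsDomSet (pathGraph n) S ∧ S.ncard = (n + 2) / 3 := by
  let f : ℕ → Fin n := fun k => ⟨min (3 * k + 1) (n - 1), by omega⟩
  refine ⟨f '' (Finset.range ((n + 2) / 3) : Set ℕ), eq_univ_of_forall fun v => ?_, ?_⟩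
  · have hmem : f (v / 3) ∈ f '' (Finset.range ((n + 2) / 3) : Set ℕ) :=
      mem_image_of_mem f (Finset.mem_coe.mpr (Finset.mem_range.mpr (by omega)))
    have hv := v.isLt
    obtain hc | hc | hc :
        (f (v / 3) : ℕ) = v ∨ (f (v / 3) : ℕ) + 1 = v ∨ (v : ℕ) + 1 = f (v / 3) := by
      simp only [f]; omega
    · exact Or.inl (Fin.ext hc ▸ hmem)
    · exact Or.inr ⟨_, hmem, pathGraph_adj.mpr (Or.inl hc)⟩
    · exact Or.inr ⟨_, hmem, pathGraph_adj.mpr (Or.inr hc)⟩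
  · rw [InjOn.ncard_image, ncard_coe_finset, Finset.card_range]
    intro k hk l hl hkl
    simp only [Finset.coe_range, mem_Iio] at hk hl
    have := congrArg Fin.val hkl
    simp only [f] at this
    omega

lemma thpd_eq_and_gamma_eq {n : ℕ} (hn : 1 ≤ n) {G : SimpleGraph (Fin n)}
    (hpath : pathGraph n ≤ G) (hcycle : G ≤ cycleGraph n) :
    thpd G = (n + 2) / 3 ∧ gamma G = (n + 2) / 3 := by
  have : NeZero n := ⟨by omega⟩
  obtain ⟨S, hS, hcard⟩ := exists_isDomSet_pathGraph hn
  have hG : G ≤ circulantGraph {1} := by rwa [← cycleGraph_eq_circulantGraph_one]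
  have hth := card_le_three_mul_thpd hG
  have hγ := card_le_three_mul_gamma hG
  have hth' := thpd_le_ncard (hS.mono hpath)
  have hγ' := gamma_le_ncard (hS.mono hpath)
  rw [Nat.card_eq_fintype_card, Fintype.card_fin] at hth hγ
  omega

lemma natCast_add_two_div_three (n : ℕ) : (((n + 2) / 3 : ℕ) : ℤ) = ⌈(n : ℚ) / 3⌉ := by
  have := Rat.ceil_natCast_div_natCast n 3
  push_cast at this
  omega

theorem stmt6 :
    (∀ n : ℕ, 1 ≤ n →
      (thpd (pathGraph n) : ℤ) = ⌈(n : ℚ) / 3⌉ ∧ (gamma (pathGraph n) : ℤ) = ⌈(n : ℚ) / 3⌉) ∧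
    (∀ n : ℕ, 3 ≤ n →
      (thpd (cycleGraph n) : ℤ) = ⌈(n : ℚ) / 3⌉ ∧ (gamma (cycleGraph n) : ℤ) = ⌈(n : ℚ) / 3⌉) := by
  refine ⟨fun n hn => ?_, fun n hn => ?_⟩
  · obtain ⟨hth, hγ⟩ := thpd_eq_and_gamma_eq hn le_rfl pathGraph_le_cycleGraph
    rw [hth, hγ, natCast_add_two_div_three]
    exact ⟨rfl, rfl⟩
  · obtain ⟨hth, hγ⟩ := thpd_eq_and_gamma_eq (n := n) (by omega) pathGraph_le_cycleGraph le_rfl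
    rw [hth, hγ, natCast_add_two_div_three]
    exact ⟨rfl, rfl⟩
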